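/- arXiv:2012.12940 — 2 statements merged into one kernel-verified Lean document; each statement's English description precedes it below -/
import Mathlib

section
/- Let t₀ < T be reals, N, M ∈ ℕ, and let A, Q : [t₀,T] → ℝ^{N×N}, B : [t₀,T] → ℝ^{N×M}, R : [t₀,T] → ℝ^{M×M} be continuous with R(t) invertible for every t. Let J : [t₀,T] → ℝ^{N×N} be differentiable and solve the Riccati equation -J'(t) = A(t)ᵀJ(t) + J(t)A(t) - J(t)B(t)R(t)⁻¹B(t)ᵀJ(t) + Q(t) with J(T) = J_T. Let K, Π : [t₀,T] → ℝ^{N×N} be differentiable and satisfy the coupled linear system K'(s) = A(s)K(s) + B(s)R(s)⁻¹B(s)ᵀΠ(s) and Π'(s) = -A(s)ᵀΠ(s) + Q(s)K(s) on [t₀,T], with boundary conditions Π(t₀) = -Id_N and Π(T) = -J_T K(T). Then Π(s) = -J(s)K(s) for all s ∈ [t₀,T]; in particular J(t₀)K(t₀) = Id_N, so J(t₀) is invertible and K(t₀) = J(t₀)⁻¹. -/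
open Matrix Set

attribute [local instance] Matrix.normedAddCommGroup Matrix.normedSpace

private lemma matEntry_contOn {s : Set ℝ} {m n : Type*} [Fintype m] [Fintype n]
    {X : ℝ → Matrix m n ℝ} (hX : ContinuousOn X s) (i : m) (j : n) :
    ContinuousOn (fun t => X t i j) s :=
  by
  have h : Continuous (fun M : Matrix m n ℝ => M i j) :=
    (continuous_apply j).comp (continuous_apply i)
  exact h.comp_continuousOn hX

private lemma matMul_contOn {s : Set ℝ} {m n p : Type*} [Fintype m] [Fintype n] [Fintype p]
    {X : ℝ → Matrix m n ℝ} {Y : ℝ → Matrix n p ℝ}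
    (hX : ContinuousOn X s) (hY : ContinuousOn Y s) :
    ContinuousOn (fun t => X t * Y t) s := by
  apply continuousOn_pi.2; intro i
  apply continuousOn_pi.2; intro j
  simp only [Matrix.mul_apply]
  exact continuousOn_finset_sum _ fun k _ =>
    (matEntry_contOn hX i k).mul (matEntry_contOn hY k j)

/-- Backward Grönwall: a matrix solution of a linear ODE vanishing at the right endpoint
vanishes on the whole interval. -/
private lemma mat_gronwall_zero {n : ℕ} {a b : ℝ} (hab : a ≤ b)
    (Mc Z : ℝ → Matrix (Fin n) (Fin n) ℝ)
    (hMc : ContinuousOn Mc (Icc a b))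
    (hZ : ∀ s ∈ Icc a b, HasDerivWithinAt Z (Mc s * Z s) (Icc a b) s)
    (hZb : Z b = 0) : ∀ s ∈ Icc a b, Z s = 0 := by
  -- bound on the matrix norm of `Mc`
  obtain ⟨x₀, hx₀mem, hx₀⟩ :=
    isCompact_Icc.exists_isMaxOn (nonempty_Icc.2 hab)
      (continuous_norm.comp_continuousOn hMc)
  set C : ℝ := (n : ℝ) * max ‖Mc x₀‖ 0 with hCdef
  have hC0 : 0 ≤ C := mul_nonneg (Nat.cast_nonneg n) (le_max_right _ _)
  have hMb : ∀ s ∈ Icc a b, ‖Mc s‖ ≤ max ‖Mc x₀‖ 0 :=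
    fun s hs => le_trans (hx₀ hs) (le_max_left _ _)
  have hmulZ : ∀ s ∈ Icc a b, ‖Mc s * Z s‖ ≤ C * ‖Z s‖ := by
    intro s hs
    refine (Matrix.norm_le_iff (mul_nonneg hC0 (norm_nonneg _))).2 fun i j => ?_
    rw [Matrix.mul_apply]
    calc ‖∑ k, Mc s i k * Z s k j‖ ≤ ∑ k, ‖Mc s i k * Z s k j‖ := norm_sum_le _ _
      _ ≤ ∑ _k : Fin n, max ‖Mc x₀‖ 0 * ‖Z s‖ := by
          refine Finset.sum_le_sum fun k _ => ?_
          rw [norm_mul]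
          exact mul_le_mul (le_trans (Matrix.norm_entry_le_entrywise_sup_norm _) (hMb s hs))
            (Matrix.norm_entry_le_entrywise_sup_norm _) (norm_nonneg _) (le_max_right _ _)
      _ = C * ‖Z s‖ := by simp [hCdef, Finset.sum_const, mul_assoc]
  -- time reversal
  set σ : ℝ → ℝ := fun u => a + b - u with hσdef
  have hσmem : ∀ u ∈ Icc a b, σ u ∈ Icc a b := by
    intro u hu
    exact ⟨by simp [hσdef]; linarith [hu.2], by simp [hσdef]; linarith [hu.1]⟩
  set W : ℝ → Matrix (Fin n) (Fin n) ℝ := fun u => Z (σ u) with hWdef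
  have hW : ∀ u ∈ Icc a b, HasDerivWithinAt W
      ((-1 : ℝ) • (Mc (σ u) * Z (σ u))) (Icc a b) u := by
    intro u hu
    have hσd : HasDerivWithinAt σ (-1) (Icc a b) u := by
      simpa using (hasDerivWithinAt_id u (Icc a b)).const_sub (a + b)
    exact (hZ (σ u) (hσmem u hu)).scomp u hσd (fun x hx => hσmem x hx)
  have hWc : ContinuousOn W (Icc a b) := fun x hx => (hW x hx).continuousWithinAt
  have hWa : ‖W a‖ ≤ 0 := by
    have : σ a = b := by simp [hσdef]
    simp [hWdef, this, hZb]
  have hWzero : ∀ x ∈ Icc a b, ‖W x‖ ≤ 0 := by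
    intro x hx
    have := norm_le_gronwallBound_of_norm_deriv_right_le (f := W)
      (f' := fun u => (-1 : ℝ) • (Mc (σ u) * Z (σ u))) (δ := 0) (K := C) (ε := 0)
      hWc
      (fun y hy => (hW y ⟨hy.1, hy.2.le⟩).mono_of_mem_nhdsWithin (Icc_mem_nhdsGE_of_mem hy))
      hWa
      (fun y hy => by
        rw [norm_smul]
        simp only [norm_neg, norm_one]
        have := hmulZ (σ y) (hσmem y ⟨hy.1, hy.2.le⟩)
        simpa [hWdef] using this.trans_eq (by ring))
      x hx
    simpa [gronwallBound_ε0_δ0] using this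
  intro s hs
  have hsσ : s = σ (σ s) := by simp [hσdef]
  have := hWzero (σ s) (hσmem s hs)
  rw [hWdef] at this
  have h0 : Z (σ (σ s)) = 0 := norm_le_zero_iff.1 this
  rwa [← hsσ] at h0

/-- The matrix-ODE core of Theorem 2 of the paper: if `J` solves the Riccati equation
with terminal value `J_T`, and `(K, P)` solve the coupled Hamiltonian system
`K' = A K + B R⁻¹ Bᵀ P`, `P' = -Aᵀ P + Q K` with `P t₀ = -Id` and `P T = -J_T K T`,
then `P = -J K` on `[t₀, T]`; in particular `J t₀ * K t₀ = Id`, so `J t₀` is invertible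
with inverse `K t₀`. -/
theorem hamiltonian_system_forces_K_eq_J_inv
    {N M : ℕ} {t₀ T : ℝ} (ht : t₀ < T)
    (A Q : ℝ → Matrix (Fin N) (Fin N) ℝ)
    (B : ℝ → Matrix (Fin N) (Fin M) ℝ)
    (R : ℝ → Matrix (Fin M) (Fin M) ℝ)
    (hA : ∀ i j, ContinuousOn (fun t => A t i j) (Icc t₀ T))
    (hQ : ∀ i j, ContinuousOn (fun t => Q t i j) (Icc t₀ T))
    (hB : ∀ i j, ContinuousOn (fun t => B t i j) (Icc t₀ T))
    (hR : ∀ i j, ContinuousOn (fun t => R t i j) (Icc t₀ T))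
    (hRinv : ∀ t ∈ Icc t₀ T, IsUnit (R t))
    (J_T : Matrix (Fin N) (Fin N) ℝ)
    (J K P : ℝ → Matrix (Fin N) (Fin N) ℝ)
    (hJ : ∀ t ∈ Icc t₀ T, ∀ i j, HasDerivWithinAt (fun s => J s i j)
      ((-((A t)ᵀ * J t + J t * A t - J t * B t * (R t)⁻¹ * (B t)ᵀ * J t + Q t)) i j)
      (Icc t₀ T) t)
    (hJT : J T = J_T)
    (hK : ∀ s ∈ Icc t₀ T, ∀ i j, HasDerivWithinAt (fun τ => K τ i j)
      ((A s * K s + B s * (R s)⁻¹ * (B s)ᵀ * P s) i j) (Icc t₀ T) s)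
    (hP : ∀ s ∈ Icc t₀ T, ∀ i j, HasDerivWithinAt (fun τ => P τ i j)
      ((-(A s)ᵀ * P s + Q s * K s) i j) (Icc t₀ T) s)
    (hP0 : P t₀ = -1)
    (hPT : P T = -(J_T * K T)) :
    (∀ s ∈ Icc t₀ T, P s = -(J s * K s)) ∧
      J t₀ * K t₀ = 1 ∧ IsUnit (J t₀) ∧ K t₀ = (J t₀)⁻¹ := by
  -- the coefficient matrix of the linear ODE satisfied by `Z = P + J*K`
  set Mc : ℝ → Matrix (Fin N) (Fin N) ℝ :=
    fun s => -(A s)ᵀ + J s * B s * (R s)⁻¹ * (B s)ᵀ with hMcdef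
  set Z : ℝ → Matrix (Fin N) (Fin N) ℝ := fun s => P s + J s * K s with hZdef
  -- continuity of all the matrix-valued functions involved
  have hAc : ContinuousOn A (Icc t₀ T) :=
    continuousOn_pi.2 fun i => continuousOn_pi.2 fun j => hA i j
  have hBc : ContinuousOn B (Icc t₀ T) :=
    continuousOn_pi.2 fun i => continuousOn_pi.2 fun j => hB i j
  have hRc : ContinuousOn R (Icc t₀ T) :=
    continuousOn_pi.2 fun i => continuousOn_pi.2 fun j => hR i j
  have hJc : ContinuousOn J (Icc t₀ T) :=
    continuousOn_pi.2 fun i => continuousOn_pi.2 fun j =>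
      fun t htm => (hJ t htm i j).continuousWithinAt
  have hRinvC : ContinuousOn (fun t => (R t)⁻¹) (Icc t₀ T) := by
    have hdetC : ContinuousOn (fun t => (R t).det) (Icc t₀ T) :=
      continuous_id.matrix_det.comp_continuousOn hRc
    have hadjC : ContinuousOn (fun t => (R t).adjugate) (Icc t₀ T) :=
      continuous_id.matrix_adjugate.comp_continuousOn hRc
    have hne : ∀ t ∈ Icc t₀ T, (R t).det ≠ 0 := fun t htm =>
      ((Matrix.isUnit_iff_isUnit_det _).1 (hRinv t htm)).ne_zero
    have hform : (fun t => (R t)⁻¹) = fun t => ((R t).det)⁻¹ • (R t).adjugate := by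
      funext t; rw [Matrix.inv_def, Ring.inverse_eq_inv']
    rw [hform]
    exact (hdetC.inv₀ hne).smul hadjC
  have hnegAt : ContinuousOn (fun s => -(A s)ᵀ) (Icc t₀ T) :=
    continuousOn_pi.2 fun i => continuousOn_pi.2 fun j => (hA j i).neg
  have hBt : ContinuousOn (fun s => (B s)ᵀ) (Icc t₀ T) :=
    continuousOn_pi.2 fun i => continuousOn_pi.2 fun j => hB j i
  have hMcc : ContinuousOn Mc (Icc t₀ T) := by
    rw [hMcdef]
    exact hnegAt.add
      (matMul_contOn (matMul_contOn (matMul_contOn hJc hBc) hRinvC) hBt)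
  -- the matrix algebra identity
  have key : ∀ s, Mc s * Z s
      = (-(A s)ᵀ * P s + Q s * K s)
        + ((-((A s)ᵀ * J s + J s * A s - J s * B s * (R s)⁻¹ * (B s)ᵀ * J s + Q s)) * K s
          + J s * (A s * K s + B s * (R s)⁻¹ * (B s)ᵀ * P s)) := by
    intro s
    rw [hMcdef, hZdef]
    noncomm_ring
    simp only [Matrix.mul_assoc]
    abel
  -- `Z` solves the linear ODE
  have hZmat : ∀ s ∈ Icc t₀ T, HasDerivWithinAt Z (Mc s * Z s) (Icc t₀ T) s := by
    intro s hs
    refine hasDerivWithinAt_pi.2 fun i => hasDerivWithinAt_pi.2 fun j => ?_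
    have h2 : HasDerivWithinAt (fun τ => ∑ k, J τ i k * K τ k j)
        (∑ k, ((-((A s)ᵀ * J s + J s * A s - J s * B s * (R s)⁻¹ * (B s)ᵀ * J s + Q s)) i k
            * K s k j
          + J s i k * ((A s * K s + B s * (R s)⁻¹ * (B s)ᵀ * P s) k j))) (Icc t₀ T) s :=
      HasDerivWithinAt.fun_sum fun k _ => (hJ s hs i k).mul (hK s hs k j)
    have h3 := (hP s hs i j).add h2
    have hfun : (fun τ => Z τ i j) = fun τ => P τ i j + ∑ k, J τ i k * K τ k j := by
      funext τ; rw [hZdef]; simp [Matrix.add_apply, Matrix.mul_apply]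
    have hval : (Mc s * Z s) i j
        = (-(A s)ᵀ * P s + Q s * K s) i j
          + ∑ k, ((-((A s)ᵀ * J s + J s * A s - J s * B s * (R s)⁻¹ * (B s)ᵀ * J s + Q s)) i k
              * K s k j
            + J s i k * ((A s * K s + B s * (R s)⁻¹ * (B s)ᵀ * P s) k j)) := by
      rw [key s]
      simp [Matrix.add_apply, Matrix.mul_apply, Finset.sum_add_distrib]
    rw [hfun, hval]
    exact h3
  have hZb : Z T = 0 := by rw [hZdef]; simp [hPT, hJT]
  have hZ0 := mat_gronwall_zero ht.le Mc Z hMcc hZmat hZb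
  have hmain : ∀ s ∈ Icc t₀ T, P s = -(J s * K s) := by
    intro s hs
    have := hZ0 s hs
    rw [hZdef] at this
    exact eq_neg_of_add_eq_zero_left this
  have ht0 : t₀ ∈ Icc t₀ T := ⟨le_rfl, ht.le⟩
  have hJK : J t₀ * K t₀ = 1 := by
    have h1 := hmain t₀ ht0
    rw [hP0] at h1
    exact (neg_inj.1 h1).symm
  refine ⟨hmain, hJK, ?_, (Matrix.inv_eq_right_inv hJK).symm⟩
  exact (Matrix.isUnit_iff_isUnit_det _).2
    (IsUnit.of_mul_eq_one (K t₀).det (by rw [← Matrix.det_mul, hJK, Matrix.det_one]))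
end

section
/- Let t₀ < T be reals, N, M ∈ ℕ. Let A : [t₀,T] → ℝ^{N×N} be (Lebesgue) integrable, B : [t₀,T] → ℝ^{N×M} be square-integrable, let J_T ∈ ℝ^{N×N} be symmetric positive definite, let Q : [t₀,T] → ℝ^{N×N} be measurable with Q(t) positive semidefinite for a.e. t, and let R : [t₀,T] → ℝ^{M×M} be measurable with R(t) symmetric and R(t) ⪰ r·Id_M for a.e. t, where r > 0. Then for every t ∈ [t₀,T] there exists a constant C ≥ 0 (depending only on t, A, B, J_T, r and [t₀,T]) such that for every absolutely continuous x : [t₀,T] → ℝᴺ and measurable u : [t₀,T] → ℝᴹ with ∫_{t₀}^{T} u(s)ᵀR(s)u(s) ds < ∞ and x'(s) = A(s)x(s) + B(s)u(s) for a.e. s ∈ [t₀,T], one has ‖x(t)‖² ≤ C · ( x(T)ᵀ J_T x(T) + ∫_{t₀}^{T} [x(s)ᵀQ(s)x(s) + u(s)ᵀR(s)u(s)] ds ). -/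
open Matrix Set MeasureTheory
open scoped ENNReal NNReal

lemma mulVec_norm_le' {n m : ℕ} (P : Matrix (Fin n) (Fin m) ℝ) (v : Fin m → ℝ) :
    ‖P *ᵥ v‖ ≤ ∑ i, ∑ j, |P i j| * |v j| := by
  have hnn : 0 ≤ ∑ i, ∑ j, |P i j| * |v j| :=
    Finset.sum_nonneg fun i _ => Finset.sum_nonneg fun j _ =>
      mul_nonneg (abs_nonneg _) (abs_nonneg _)
  refine (pi_norm_le_iff_of_nonneg hnn).2 fun i => ?_
  have h1 : ‖(P *ᵥ v) i‖ ≤ ∑ j, |P i j| * |v j| := by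
    calc ‖(P *ᵥ v) i‖ = |∑ j, P i j * v j| := by
          simp [Matrix.mulVec, dotProduct, Real.norm_eq_abs]
      _ ≤ ∑ j, |P i j * v j| := Finset.abs_sum_le_sum_abs _ _
      _ = ∑ j, |P i j| * |v j| := by simp [abs_mul]
  refine h1.trans ?_
  exact Finset.single_le_sum (f := fun i => ∑ j, |P i j| * |v j|)
    (fun i _ => Finset.sum_nonneg fun j _ => mul_nonneg (abs_nonneg _) (abs_nonneg _))
    (Finset.mem_univ i)

lemma mulVec_norm_le {n m : ℕ} (P : Matrix (Fin n) (Fin m) ℝ) (v : Fin m → ℝ) :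
    ‖P *ᵥ v‖ ≤ (∑ i, ∑ j, |P i j|) * ‖v‖ := by
  refine (mulVec_norm_le' P v).trans ?_
  rw [Finset.sum_mul]
  refine Finset.sum_le_sum fun i _ => ?_
  rw [Finset.sum_mul]
  refine Finset.sum_le_sum fun j _ => ?_
  refine mul_le_mul_of_nonneg_left ?_ (abs_nonneg _)
  simpa [Real.norm_eq_abs] using norm_le_pi_norm v j

lemma posdef_lower_bound {n : ℕ} {J : Matrix (Fin n) (Fin n) ℝ} (hJ : J.PosDef) :
    ∃ lam : ℝ, 0 < lam ∧ ∀ v : Fin n → ℝ, lam * ‖v‖ ^ 2 ≤ v ⬝ᵥ J *ᵥ v := by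
  have hsc : ∀ (c : ℝ) (v : Fin n → ℝ), (c • v) ⬝ᵥ J *ᵥ (c • v) = c ^ 2 * (v ⬝ᵥ J *ᵥ v) := by
    intro c v
    rw [Matrix.mulVec_smul, smul_dotProduct, dotProduct_smul]
    simp [smul_eq_mul]; ring
  rcases Nat.eq_zero_or_pos n with rfl | hn
  · refine ⟨1, one_pos, fun v => ?_⟩
    have hv : v = 0 := Subsingleton.elim _ _
    rw [hv, norm_zero]
    simp
  · haveI : Nonempty (Fin n) := ⟨⟨0, hn⟩⟩
    have hcont : Continuous fun v : Fin n → ℝ => v ⬝ᵥ J *ᵥ v := by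
      simp only [dotProduct, Matrix.mulVec]
      exact continuous_finset_sum _ fun i _ => (continuous_apply i).mul
        (continuous_finset_sum _ fun j _ => continuous_const.mul (continuous_apply j))
    obtain ⟨z, hz, hmin⟩ := (isCompact_sphere (0 : Fin n → ℝ) 1).exists_isMinOn
      (NormedSpace.sphere_nonempty.2 zero_le_one) hcont.continuousOn
    have hz1 : ‖z‖ = 1 := mem_sphere_zero_iff_norm.1 hz
    have hz0 : z ≠ 0 := by intro h; rw [h] at hz1; simp at hz1
    have hlam : 0 < z ⬝ᵥ J *ᵥ z := by
      have := hJ.dotProduct_mulVec_pos hz0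
      simpa [star_trivial] using this
    refine ⟨z ⬝ᵥ J *ᵥ z, hlam, fun v => ?_⟩
    rcases eq_or_ne v 0 with rfl | hv0
    · simp
    · have hvn : 0 < ‖v‖ := norm_pos_iff.2 hv0
      have hw : (‖v‖⁻¹ • v) ∈ Metric.sphere (0 : Fin n → ℝ) 1 := by
        rw [mem_sphere_zero_iff_norm, norm_smul]
        simp [abs_of_pos (inv_pos.2 hvn), inv_mul_cancel₀ hvn.ne']
      have := isMinOn_iff.1 hmin _ hw
      rw [hsc] at this
      have h2 : (z ⬝ᵥ J *ᵥ z) * ‖v‖ ^ 2 ≤ (‖v‖⁻¹) ^ 2 * (v ⬝ᵥ J *ᵥ v) * ‖v‖ ^ 2 :=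
        mul_le_mul_of_nonneg_right this (sq_nonneg _)
      calc (z ⬝ᵥ J *ᵥ z) * ‖v‖ ^ 2 ≤ (‖v‖⁻¹) ^ 2 * (v ⬝ᵥ J *ᵥ v) * ‖v‖ ^ 2 := h2
        _ = v ⬝ᵥ J *ᵥ v := by field_simp

set_option maxHeartbeats 1000000 in
/-- Lemma 1 of the paper (continuity of the evaluation functionals on `(Sₓ, ‖·‖_K)`):
for each `t ∈ [t₀, T]` there is a constant `C ≥ 0`, depending only on
`t, A, B, J_T, r` and `[t₀, T]`, such that every controlled trajectory
`x' = A x + B u` (absolutely continuous `x`, measurable `u` with finite `∫ uᵀ R u`)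
satisfies `‖x t‖² ≤ C ⬝ (x(T)ᵀ J_T x(T) + ∫ (xᵀ Q x + uᵀ R u))`. -/
theorem evaluation_functional_continuous
    {N M : ℕ} {t₀ T : ℝ} (ht : t₀ < T)
    (A Q : ℝ → Matrix (Fin N) (Fin N) ℝ)
    (B : ℝ → Matrix (Fin N) (Fin M) ℝ)
    (R : ℝ → Matrix (Fin M) (Fin M) ℝ)
    (J_T : Matrix (Fin N) (Fin N) ℝ)
    (hAint : ∀ i j, IntegrableOn (fun t => A t i j) (Icc t₀ T))
    (hBsq : ∀ i j, IntegrableOn (fun t => (B t i j) ^ 2) (Icc t₀ T))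
    (hJT : J_T.PosDef)
    (hQmeas : ∀ i j, Measurable fun t => Q t i j)
    (hQpsd : ∀ᵐ t ∂(volume.restrict (Icc t₀ T)), (Q t).PosSemidef)
    (hRmeas : ∀ i j, Measurable fun t => R t i j)
    (r : ℝ) (hr : 0 < r)
    (hRsymm : ∀ᵐ t ∂(volume.restrict (Icc t₀ T)), (R t).IsSymm)
    (hRge : ∀ᵐ t ∂(volume.restrict (Icc t₀ T)), (R t - r • 1).PosSemidef) :
    ∀ t ∈ Icc t₀ T, ∃ C : NNReal,
      ∀ (x : ℝ → Fin N → ℝ) (u : ℝ → Fin M → ℝ),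
        Measurable u →
        (∫⁻ s in Icc t₀ T, ENNReal.ofReal (u s ⬝ᵥ R s *ᵥ u s)) < ⊤ →
        IntegrableOn (fun s => A s *ᵥ x s + B s *ᵥ u s) (Icc t₀ T) →
        (∀ τ ∈ Icc t₀ T, x τ = x t₀ + ∫ s in t₀..τ, (A s *ᵥ x s + B s *ᵥ u s)) →
        ENNReal.ofReal (‖x t‖ ^ 2) ≤
          C * (ENNReal.ofReal (x T ⬝ᵥ J_T *ᵥ x T) +
            ∫⁻ s in Icc t₀ T, ENNReal.ofReal (x s ⬝ᵥ Q s *ᵥ x s + u s ⬝ᵥ R s *ᵥ u s)) := by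
  intro t htmem
  obtain ⟨lam, hlam, hlamle⟩ := posdef_lower_bound hJT
  -- the integrable coefficient `a`
  set a : ℝ → ℝ := fun s => ∑ i, ∑ j, |A s i j| with ha_def
  have ha_int : IntegrableOn a (Icc t₀ T) :=
    integrable_finset_sum _ fun i _ => integrable_finset_sum _ fun j _ => (hAint i j).abs
  have ha_nn : ∀ s, 0 ≤ a s := fun s =>
    Finset.sum_nonneg fun i _ => Finset.sum_nonneg fun j _ => abs_nonneg _
  -- partition of [t₀, T] into subintervals where ∫ a ≤ 1/2
  have hF : ContinuousOn (fun τ' => ∫ s in Ioc t₀ τ', a s) (Icc t₀ T) :=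
    intervalIntegral.continuousOn_primitive ha_int
  obtain ⟨δ, hδ, hδ'⟩ := Metric.uniformContinuousOn_iff.1
    (isCompact_Icc.uniformContinuousOn_of_continuous hF) (1/2) (by norm_num)
  set m : ℕ := ⌈2 * (T - t₀) / δ⌉₊ with hm_def
  have hm1 : 1 ≤ m := by
    rw [hm_def]
    exact Nat.one_le_ceil_iff.2 (div_pos (by linarith) hδ)
  have hm0 : (0 : ℝ) < (m : ℝ) := by exact_mod_cast hm1
  set τ : ℕ → ℝ := fun i => t₀ + (T - t₀) * i / m with hτ_def
  have hτ0 : τ 0 = t₀ := by simp [hτ_def]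
  have hτm : τ m = T := by
    rw [hτ_def]
    field_simp
    ring
  have hτmono : ∀ i j : ℕ, i ≤ j → τ i ≤ τ j := by
    intro i j hij
    have hCast : (i : ℝ) ≤ (j : ℝ) := by exact_mod_cast hij
    rw [hτ_def]
    dsimp only
    gcongr <;> linarith
  have hτmem : ∀ i, i ≤ m → τ i ∈ Icc t₀ T := by
    intro i hi
    constructor
    · rw [← hτ0]; exact hτmono 0 i (Nat.zero_le i)
    · rw [← hτm]; exact hτmono i m hi
  have hτstep : ∀ i : ℕ, τ (i + 1) - τ i = (T - t₀) / m := by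
    intro i
    rw [hτ_def]
    push_cast
    field_simp
    ring
  have hstepδ : (T - t₀) / m < δ := by
    have hceil : 2 * (T - t₀) / δ ≤ (m : ℝ) := by rw [hm_def]; exact Nat.le_ceil _
    rw [div_lt_iff₀ hm0]
    have h2 : δ * (2 * (T - t₀) / δ) = 2 * (T - t₀) := by field_simp
    nlinarith
  -- interval integrability of a on subintervals
  have haii : ∀ p q, t₀ ≤ p → p ≤ q → q ≤ T → IntervalIntegrable a volume p q := by
    intro p q h1 h2 h3
    exact (ha_int.mono_set (by rw [Set.uIcc_of_le h2]; exact Icc_subset_Icc h1 h3)).intervalIntegrable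
  have hFdiff : ∀ p q, t₀ ≤ p → p ≤ q → q ≤ T →
      (∫ s in p..q, a s) = (∫ s in Ioc t₀ q, a s) - (∫ s in Ioc t₀ p, a s) := by
    intro p q h1 h2 h3
    have e1 : (∫ s in t₀..p, a s) + (∫ s in p..q, a s) = ∫ s in t₀..q, a s :=
      intervalIntegral.integral_add_adjacent_intervals (haii t₀ p le_rfl h1 (h2.trans h3))
        (haii p q h1 h2 h3)
    have e2 : (∫ s in t₀..p, a s) = ∫ s in Ioc t₀ p, a s := intervalIntegral.integral_of_le h1
    have e3 : (∫ s in t₀..q, a s) = ∫ s in Ioc t₀ q, a s :=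
      intervalIntegral.integral_of_le (h1.trans h2)
    linarith
  have hsmall : ∀ i : ℕ, i + 1 ≤ m → (∫ s in τ i..τ (i + 1), a s) ≤ 1/2 := by
    intro i hi
    have hp := hτmem i (by omega)
    have hq := hτmem (i + 1) hi
    have hpq : τ i ≤ τ (i + 1) := hτmono i (i + 1) (by omega)
    have hd : dist (τ (i + 1)) (τ i) < δ := by
      rw [Real.dist_eq, hτstep i, abs_of_nonneg (div_nonneg (by linarith) hm0.le)]
      exact hstepδ
    have := hδ' (τ (i + 1)) hq (τ i) hp hd
    rw [Real.dist_eq] at this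
    have habs := le_abs_self ((∫ s in Ioc t₀ (τ (i+1)), a s) - ∫ s in Ioc t₀ (τ i), a s)
    rw [hFdiff (τ i) (τ (i+1)) hp.1 hpq hq.2]
    linarith
  -- the constants
  set K : ℝ := ∑ i : Fin N, ∑ j : Fin M, (∫ s in Icc t₀ T, (B s i j)^2) ^ (1/2 : ℝ) with hK_def
  have hK_nn : 0 ≤ K :=
    Finset.sum_nonneg fun i _ => Finset.sum_nonneg fun j _ =>
      Real.rpow_nonneg (integral_nonneg fun s => sq_nonneg _) _
  set C₀ : ℝ := 2 * 16 ^ m * (1/lam + K^2/r) with hC₀_def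
  have hc1 : (0:ℝ) ≤ 1/lam := by positivity
  have hc2 : (0:ℝ) ≤ K^2/r := by positivity
  have hC₀nn : 0 ≤ C₀ := by positivity
  refine ⟨C₀.toNNReal, ?_⟩
  intro x u hu hufin hfi hx
  -- continuity of x on [t₀, T]
  have hxc : ContinuousOn x (Icc t₀ T) := by
    have h1 : ContinuousOn (fun τ' => x t₀ + ∫ s in Ioc t₀ τ', (A s *ᵥ x s + B s *ᵥ u s))
        (Icc t₀ T) := continuousOn_const.add (intervalIntegral.continuousOn_primitive hfi)
    refine h1.congr fun τ' hτ' => ?_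
    rw [hx τ' hτ']
    congr 1
    exact intervalIntegral.integral_of_le hτ'.1
  have huj : ∀ j : Fin M, Measurable fun s => u s j := fun j => (measurable_pi_apply j).comp hu
  have hself : ∀ w : Fin M → ℝ, 0 ≤ w ⬝ᵥ w := fun w =>
    Finset.sum_nonneg fun i _ => mul_self_nonneg _
  -- pointwise coercivity of R
  have hRu : ∀ᵐ s ∂(volume.restrict (Icc t₀ T)),
      r * (u s ⬝ᵥ u s) ≤ u s ⬝ᵥ R s *ᵥ u s := by
    filter_upwards [hRge] with s hs
    have h0 := hs.dotProduct_mulVec_nonneg (u s)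
    simp only [star_trivial, Matrix.sub_mulVec, dotProduct_sub,
      Matrix.smul_mulVec, Matrix.one_mulVec, dotProduct_smul, smul_eq_mul] at h0
    linarith
  set I : ℝ := (∫⁻ s in Icc t₀ T, ENNReal.ofReal (u s ⬝ᵥ R s *ᵥ u s)).toReal with hI_def
  have hI_nn : 0 ≤ I := ENNReal.toReal_nonneg
  -- L² bound on components of u
  have hlintuj : ∀ j : Fin M, (∫⁻ s in Icc t₀ T, ENNReal.ofReal ((u s j)^2)) ≤
      ENNReal.ofReal (1/r) * (∫⁻ s in Icc t₀ T, ENNReal.ofReal (u s ⬝ᵥ R s *ᵥ u s)) := by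
    intro j
    have hmono : ∀ᵐ s ∂(volume.restrict (Icc t₀ T)),
        ENNReal.ofReal ((u s j)^2) ≤ ENNReal.ofReal ((1/r) * (u s ⬝ᵥ R s *ᵥ u s)) := by
      filter_upwards [hRu] with s hs
      apply ENNReal.ofReal_le_ofReal
      have h1 : (u s j)^2 ≤ u s ⬝ᵥ u s := by
        have := Finset.single_le_sum (f := fun i => u s i * u s i)
          (fun i _ => mul_self_nonneg _) (Finset.mem_univ j)
        simpa [dotProduct, sq] using this
      have h2 : u s ⬝ᵥ u s ≤ (u s ⬝ᵥ R s *ᵥ u s) / r := (le_div_iff₀ hr).2 (by linarith)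
      calc (u s j)^2 ≤ u s ⬝ᵥ u s := h1
        _ ≤ (u s ⬝ᵥ R s *ᵥ u s) / r := h2
        _ = (1/r) * (u s ⬝ᵥ R s *ᵥ u s) := by ring
    calc (∫⁻ s in Icc t₀ T, ENNReal.ofReal ((u s j)^2))
        ≤ ∫⁻ s in Icc t₀ T, ENNReal.ofReal ((1/r) * (u s ⬝ᵥ R s *ᵥ u s)) :=
          lintegral_mono_ae hmono
      _ = ENNReal.ofReal (1/r) * ∫⁻ s in Icc t₀ T, ENNReal.ofReal (u s ⬝ᵥ R s *ᵥ u s) := by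
          simp_rw [ENNReal.ofReal_mul (by positivity : (0:ℝ) ≤ 1/r)]
          exact lintegral_const_mul' _ _ ENNReal.ofReal_ne_top
  have hujint : ∀ j : Fin M, IntegrableOn (fun s => (u s j)^2) (Icc t₀ T) := by
    intro j
    refine ⟨((huj j).pow_const 2).aestronglyMeasurable, ?_⟩
    rw [hasFiniteIntegral_iff_norm]
    have heq : (∫⁻ s in Icc t₀ T, ENNReal.ofReal ‖(u s j)^2‖) =
        ∫⁻ s in Icc t₀ T, ENNReal.ofReal ((u s j)^2) := by
      refine lintegral_congr fun s => ?_
      rw [Real.norm_of_nonneg (sq_nonneg _)]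
    rw [heq]
    exact lt_of_le_of_lt (hlintuj j) (ENNReal.mul_lt_top ENNReal.ofReal_lt_top hufin)
  have hujle : ∀ j : Fin M, (∫ s in Icc t₀ T, (u s j)^2) ≤ (1/r) * I := by
    intro j
    have heq : (∫ s in Icc t₀ T, (u s j)^2) =
        (∫⁻ s in Icc t₀ T, ENNReal.ofReal ((u s j)^2)).toReal :=
      integral_eq_lintegral_of_nonneg_ae (ae_of_all _ fun s => sq_nonneg _)
        ((huj j).pow_const 2).aestronglyMeasurable
    rw [heq]
    have hmt : ENNReal.ofReal (1/r) *
        (∫⁻ s in Icc t₀ T, ENNReal.ofReal (u s ⬝ᵥ R s *ᵥ u s)) ≠ ⊤ :=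
      ENNReal.mul_ne_top ENNReal.ofReal_ne_top hufin.ne
    have := ENNReal.toReal_mono hmt (hlintuj j)
    rwa [ENNReal.toReal_mul, ENNReal.toReal_ofReal (by positivity)] at this
  -- measurability of |B i j|
  have hBabs : ∀ (i : Fin N) (j : Fin M),
      AEStronglyMeasurable (fun s => |B s i j|) (volume.restrict (Icc t₀ T)) := by
    intro i j
    have h2 : AEStronglyMeasurable (fun s => Real.sqrt ((B s i j)^2))
        (volume.restrict (Icc t₀ T)) :=
      Real.continuous_sqrt.comp_aestronglyMeasurable (hBsq i j).aestronglyMeasurable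
    exact h2.congr (ae_of_all _ fun s => Real.sqrt_sq_eq_abs _)
  -- the inhomogeneity β and its integral bI
  set β : ℝ → ℝ := fun s => ∑ i : Fin N, ∑ j : Fin M, |B s i j| * |u s j| with hβ_def
  have hβnn : ∀ s, 0 ≤ β s := fun s =>
    Finset.sum_nonneg fun i _ => Finset.sum_nonneg fun j _ =>
      mul_nonneg (abs_nonneg _) (abs_nonneg _)
  have hβsummand : ∀ (i : Fin N) (j : Fin M),
      IntegrableOn (fun s => |B s i j| * |u s j|) (Icc t₀ T) := by
    intro i j
    refine Integrable.mono' (((hBsq i j).add (hujint j)).div_const 2)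
      ((hBabs i j).mul ((huj j).abs.aestronglyMeasurable)) ?_
    refine ae_of_all _ fun s => ?_
    rw [Real.norm_eq_abs, abs_of_nonneg (mul_nonneg (abs_nonneg _) (abs_nonneg _))]
    simp only [Pi.add_apply]
    nlinarith [sq_nonneg (|B s i j| - |u s j|), sq_abs (B s i j), sq_abs (u s j)]
  have hβint : IntegrableOn β (Icc t₀ T) :=
    integrable_finset_sum _ fun i _ => integrable_finset_sum _ fun j _ => hβsummand i j
  set bI : ℝ := ∫ s in Icc t₀ T, β s with hbI_def
  have hbI_nn : 0 ≤ bI := integral_nonneg fun s => hβnn s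
  -- Cauchy-Schwarz bound on bI
  have hconj : Real.HolderConjugate 2 2 := Real.HolderConjugate.two_two
  have hmem2 : ∀ f : ℝ → ℝ, AEStronglyMeasurable f (volume.restrict (Icc t₀ T)) →
      IntegrableOn (fun s => (f s)^2) (Icc t₀ T) →
      MemLp f (ENNReal.ofReal 2) (volume.restrict (Icc t₀ T)) := by
    intro f hmeas hint
    have h2 : ENNReal.ofReal (2:ℝ) = 2 := by norm_num
    rw [h2]
    exact (memLp_two_iff_integrable_sq hmeas).2 hint
  have hr2 : ∀ y : ℝ, y ^ (2:ℝ) = y ^ 2 := fun y => by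
    rw [show (2:ℝ) = ((2:ℕ):ℝ) by norm_num, Real.rpow_natCast]
  have hbI_le : bI ≤ K * ((1/r) * I) ^ (1/2 : ℝ) := by
    have hsum : bI = ∑ i : Fin N, ∑ j : Fin M, ∫ s in Icc t₀ T, |B s i j| * |u s j| := by
      rw [hbI_def, hβ_def]
      rw [integral_finset_sum _ fun i _ =>
        integrable_finset_sum _ fun j _ => hβsummand i j]
      exact Finset.sum_congr rfl fun i _ => integral_finset_sum _ fun j _ => hβsummand i j
    rw [hsum, hK_def, Finset.sum_mul]
    refine Finset.sum_le_sum fun i _ => ?_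
    rw [Finset.sum_mul]
    refine Finset.sum_le_sum fun j _ => ?_
    have hH := MeasureTheory.integral_mul_le_Lp_mul_Lq_of_nonneg hconj
      (ae_of_all _ fun s => abs_nonneg (B s i j)) (ae_of_all _ fun s => abs_nonneg (u s j))
      (hmem2 _ (hBabs i j) (by simpa [sq_abs] using hBsq i j))
      (hmem2 _ ((huj j).abs.aestronglyMeasurable) (by simpa [sq_abs] using hujint j))
    simp_rw [hr2, sq_abs] at hH
    refine hH.trans ?_
    refine mul_le_mul_of_nonneg_left ?_
      (Real.rpow_nonneg (integral_nonneg fun s => sq_nonneg _) _)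
    exact Real.rpow_le_rpow (integral_nonneg fun s => sq_nonneg _) (hujle j) (by norm_num)
  have hbIsq : bI^2 ≤ K^2/r * I := by
    have h1 : (((1/r) * I) ^ (1/2:ℝ))^2 = (1/r) * I := by
      rw [← Real.rpow_natCast (((1/r) * I) ^ (1/2:ℝ)) 2, ← Real.rpow_mul (by positivity)]
      norm_num
    calc bI^2 ≤ (K * ((1/r) * I) ^ (1/2:ℝ))^2 := pow_le_pow_left₀ hbI_nn hbI_le 2
      _ = K^2 * (((1/r) * I) ^ (1/2:ℝ))^2 := by ring
      _ = K^2/r * I := by rw [h1]; ring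
  -- integrability of a * ‖x‖
  have hah : IntegrableOn (fun s => a s * ‖x s‖) (Icc t₀ T) :=
    ha_int.mul_continuousOn hxc.norm isCompact_Icc
  -- the key integral inequality
  have key : ∀ p q, t₀ ≤ p → p ≤ q → q ≤ T →
      ‖x p‖ ≤ ‖x q‖ + (∫ s in p..q, a s * ‖x s‖) + bI := by
    intro p q hp hpq hq
    have hpt : p ∈ Icc t₀ T := ⟨hp, hpq.trans hq⟩
    have hqt : q ∈ Icc t₀ T := ⟨hp.trans hpq, hq⟩
    have hmk : ∀ (g : ℝ → ℝ), IntegrableOn g (Icc t₀ T) → IntervalIntegrable g volume p q :=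
      fun g hg => (hg.mono_set (by rw [Set.uIcc_of_le hpq]; exact Icc_subset_Icc hp hq)).intervalIntegrable
    have hii : ∀ p' q', t₀ ≤ p' → p' ≤ q' → q' ≤ T →
        IntervalIntegrable (fun s => A s *ᵥ x s + B s *ᵥ u s) volume p' q' := by
      intro p' q' h1 h2 h3
      exact (hfi.mono_set (by rw [Set.uIcc_of_le h2]; exact Icc_subset_Icc h1 h3)).intervalIntegrable
    have e : x q - x p = ∫ s in p..q, (A s *ᵥ x s + B s *ᵥ u s) := by
      rw [hx q hqt, hx p hpt]
      simp only [add_sub_add_left_eq_sub]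
      exact intervalIntegral.integral_interval_sub_left (hii t₀ q le_rfl hqt.1 hq)
        (hii t₀ p le_rfl hp (hpq.trans hq))
    have h1 : ‖x p‖ ≤ ‖x q‖ + ‖x q - x p‖ := by
      calc ‖x p‖ = ‖x q - (x q - x p)‖ := by rw [sub_sub_cancel]
        _ ≤ ‖x q‖ + ‖x q - x p‖ := norm_sub_le _ _
    have h2 : ‖x q - x p‖ ≤ ∫ s in p..q, ‖A s *ᵥ x s + B s *ᵥ u s‖ := by
      rw [e]
      exact intervalIntegral.norm_integral_le_integral_norm hpq
    have h3 : (∫ s in p..q, ‖A s *ᵥ x s + B s *ᵥ u s‖) ≤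
        ∫ s in p..q, (a s * ‖x s‖ + β s) := by
      refine intervalIntegral.integral_mono_on hpq (hmk _ hfi.norm) (hmk _ (hah.add hβint))
        fun s _ => ?_
      refine (norm_add_le _ _).trans (add_le_add ?_ ?_)
      · exact mulVec_norm_le (A s) (x s)
      · exact mulVec_norm_le' (B s) (u s)
    have h4 : (∫ s in p..q, (a s * ‖x s‖ + β s)) =
        (∫ s in p..q, a s * ‖x s‖) + ∫ s in p..q, β s :=
      intervalIntegral.integral_add (hmk _ hah) (hmk _ hβint)
    have h5 : (∫ s in p..q, β s) ≤ bI := by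
      rw [intervalIntegral.integral_of_le hpq, hbI_def]
      exact setIntegral_mono_set hβint (ae_of_all _ fun s => hβnn s)
        ((Ioc_subset_Icc_self.trans (Icc_subset_Icc hp hq)).eventuallyLE)
    linarith
  -- the local Grönwall step
  have step : ∀ p q, t₀ ≤ p → p ≤ q → q ≤ T → (∫ s in p..q, a s) ≤ 1/2 →
      ∀ E : ℝ, ‖x q‖ ≤ E → ∀ t' ∈ Icc p q, ‖x t'‖ ≤ 2*E + 2*bI := by
    intro p q hp hpq hq hhalf E hE
    have hsub : Icc p q ⊆ Icc t₀ T := Icc_subset_Icc hp hq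
    obtain ⟨z, hzmem, hzmax⟩ := isCompact_Icc.exists_isMaxOn (nonempty_Icc.2 hpq)
      (hxc.mono hsub).norm
    have hmax : ∀ w ∈ Icc p q, ‖x w‖ ≤ ‖x z‖ := fun w hw => hzmax hw
    have hzt : t₀ ≤ z := hp.trans hzmem.1
    have hkey := key z q hzt hzmem.2 hq
    have haz : IntervalIntegrable a volume z q := haii z q hzt hzmem.2 hq
    have hahz : IntervalIntegrable (fun s => a s * ‖x s‖) volume z q := by
      apply MeasureTheory.IntegrableOn.intervalIntegrable
      rw [Set.uIcc_of_le hzmem.2]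
      exact hah.mono_set (Icc_subset_Icc hzt hq)
    have h2 : (∫ s in z..q, a s * ‖x s‖) ≤ ∫ s in z..q, a s * ‖x z‖ := by
      refine intervalIntegral.integral_mono_on hzmem.2 hahz (haz.mul_const _) fun s hs => ?_
      exact mul_le_mul_of_nonneg_left (hmax s ⟨hzmem.1.trans hs.1, hs.2⟩) (ha_nn s)
    have h3 : (∫ s in z..q, a s * ‖x z‖) = (∫ s in z..q, a s) * ‖x z‖ :=
      intervalIntegral.integral_mul_const _ _
    have h4 : (∫ s in z..q, a s) ≤ ∫ s in p..q, a s := by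
      rw [intervalIntegral.integral_of_le hzmem.2, intervalIntegral.integral_of_le hpq]
      exact setIntegral_mono_set (ha_int.mono_set (Ioc_subset_Icc_self.trans hsub))
        (ae_of_all _ fun s => ha_nn s) ((Ioc_subset_Ioc_left hzmem.1).eventuallyLE)
    have h6 : (∫ s in z..q, a s) * ‖x z‖ ≤ (1/2) * ‖x z‖ :=
      mul_le_mul_of_nonneg_right (h4.trans hhalf) (norm_nonneg _)
    have h7 : (∫ s in z..q, a s * ‖x s‖) ≤ (1/2) * ‖x z‖ := h2.trans (h3 ▸ h6)
    have hz2 : ‖x z‖ ≤ 2*E + 2*bI := by linarith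
    intro t' ht'
    exact (hmax t' ht').trans hz2
  -- the chained Grönwall bound by backward induction over the partition
  have main : ∀ i : ℕ, i ≤ m → ∀ t', t' ∈ Icc (τ (m - i)) T →
      ‖x t'‖ ≤ 4 ^ i * (‖x T‖ + bI) := by
    intro i
    induction i with
    | zero =>
      intro _ t' ht'
      rw [Nat.sub_zero, hτm] at ht'
      have heq : t' = T := le_antisymm ht'.2 ht'.1
      rw [heq]
      simp only [pow_zero, one_mul]
      linarith
    | succ i ih =>
      intro hi t' ht'
      have him : i ≤ m := Nat.le_of_succ_le hi
      have hqmem := hτmem (m - i) (by omega)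
      have hpmem := hτmem (m - (i+1)) (by omega)
      have hpq : τ (m - (i+1)) ≤ τ (m - i) := hτmono _ _ (by omega)
      have hcnn : (0:ℝ) ≤ ‖x T‖ + bI := add_nonneg (norm_nonneg _) hbI_nn
      by_cases hc : τ (m - i) ≤ t'
      · refine (ih him t' ⟨hc, ht'.2⟩).trans (mul_le_mul_of_nonneg_right ?_ hcnn)
        exact pow_le_pow_right₀ (by norm_num) (Nat.le_succ i)
      · push_neg at hc
        have hqE := ih him (τ (m - i)) ⟨le_rfl, hqmem.2⟩
        have hhalf : (∫ s in τ (m - (i+1))..τ (m - i), a s) ≤ 1/2 := by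
          have h := hsmall (m - (i+1)) (by omega)
          have he : m - (i+1) + 1 = m - i := by omega
          rwa [he] at h
        have hst := step _ _ hpmem.1 hpq hqmem.2 hhalf _ hqE t' ⟨ht'.1, hc.le⟩
        have h41 : (1:ℝ) ≤ 4 ^ i := one_le_pow₀ (by norm_num)
        have hx41 : (‖x T‖ + bI) ≤ 4 ^ i * (‖x T‖ + bI) := le_mul_of_one_le_left hcnn h41
        have hps : (4:ℝ) ^ (i+1) = 4 * 4 ^ i := by rw [pow_succ]; ring
        have hbX : bI ≤ 4 ^ i * (‖x T‖ + bI) :=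
          le_trans (by linarith [norm_nonneg (x T)]) hx41
        calc ‖x t'‖ ≤ 2 * (4 ^ i * (‖x T‖ + bI)) + 2 * bI := hst
          _ ≤ 4 ^ (i+1) * (‖x T‖ + bI) := by rw [hps]; linarith
  -- conclusion in the reals
  have hfin : ‖x t‖ ≤ 4 ^ m * (‖x T‖ + bI) := by
    refine main m le_rfl t ⟨?_, htmem.2⟩
    rw [Nat.sub_self, hτ0]
    exact htmem.1
  have hP_nn : 0 ≤ x T ⬝ᵥ J_T *ᵥ x T := le_trans (by positivity) (hlamle (x T))
  have hJJ : ‖x T‖^2 ≤ (1/lam) * (x T ⬝ᵥ J_T *ᵥ x T) := by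
    rw [one_div_mul_eq_div]
    exact (le_div_iff₀' hlam).2 (hlamle (x T))
  have hsq : ‖x t‖^2 ≤ C₀ * ((x T ⬝ᵥ J_T *ᵥ x T) + I) := by
    have s1 : ‖x t‖^2 ≤ (4 ^ m * (‖x T‖ + bI))^2 := pow_le_pow_left₀ (norm_nonneg _) hfin 2
    have s2 : ((4:ℝ) ^ m)^2 = 16 ^ m := by
      rw [← pow_mul, mul_comm, pow_mul]
      norm_num
    have s3 : (‖x T‖ + bI)^2 ≤ 2*‖x T‖^2 + 2*bI^2 := by nlinarith [sq_nonneg (‖x T‖ - bI)]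
    have s4 : (0:ℝ) ≤ 16 ^ m := by positivity
    calc ‖x t‖^2 ≤ (4 ^ m * (‖x T‖ + bI))^2 := s1
      _ = 16 ^ m * (‖x T‖ + bI)^2 := by rw [mul_pow, s2]
      _ ≤ 16 ^ m * (2*‖x T‖^2 + 2*bI^2) := mul_le_mul_of_nonneg_left s3 s4
      _ ≤ 16 ^ m * (2*((1/lam) * (x T ⬝ᵥ J_T *ᵥ x T)) + 2*(K^2/r * I)) := by
          refine mul_le_mul_of_nonneg_left (by linarith) s4
      _ ≤ 16 ^ m * (2*(1/lam + K^2/r)*((x T ⬝ᵥ J_T *ᵥ x T) + I)) := by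
          refine mul_le_mul_of_nonneg_left ?_ s4
          nlinarith [mul_nonneg hc1 hI_nn, mul_nonneg hc2 hP_nn]
      _ = C₀ * ((x T ⬝ᵥ J_T *ᵥ x T) + I) := by rw [hC₀_def]; ring
  -- pass to ℝ≥0∞
  have hle2 : (∫⁻ s in Icc t₀ T, ENNReal.ofReal (u s ⬝ᵥ R s *ᵥ u s)) ≤
      ∫⁻ s in Icc t₀ T, ENNReal.ofReal (x s ⬝ᵥ Q s *ᵥ x s + u s ⬝ᵥ R s *ᵥ u s) := by
    refine lintegral_mono_ae ?_
    filter_upwards [hQpsd] with s hs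
    refine ENNReal.ofReal_le_ofReal ?_
    have h0 : 0 ≤ x s ⬝ᵥ Q s *ᵥ x s := by
      have := hs.dotProduct_mulVec_nonneg (x s)
      simpa [star_trivial] using this
    linarith
  have hIof : ENNReal.ofReal I = ∫⁻ s in Icc t₀ T, ENNReal.ofReal (u s ⬝ᵥ R s *ᵥ u s) := by
    rw [hI_def]
    exact ENNReal.ofReal_toReal hufin.ne
  calc ENNReal.ofReal (‖x t‖^2)
      ≤ ENNReal.ofReal (C₀ * ((x T ⬝ᵥ J_T *ᵥ x T) + I)) := ENNReal.ofReal_le_ofReal hsq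
    _ = ENNReal.ofReal C₀ * ENNReal.ofReal ((x T ⬝ᵥ J_T *ᵥ x T) + I) := ENNReal.ofReal_mul hC₀nn
    _ = ENNReal.ofReal C₀ * (ENNReal.ofReal (x T ⬝ᵥ J_T *ᵥ x T) + ENNReal.ofReal I) := by
        rw [ENNReal.ofReal_add hP_nn hI_nn]
    _ ≤ ENNReal.ofReal C₀ * (ENNReal.ofReal (x T ⬝ᵥ J_T *ᵥ x T) +
          ∫⁻ s in Icc t₀ T, ENNReal.ofReal (x s ⬝ᵥ Q s *ᵥ x s + u s ⬝ᵥ R s *ᵥ u s)) := by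
        refine mul_le_mul_right (add_le_add le_rfl ?_) _
        rw [hIof]
        exact hle2
    _ = ↑C₀.toNNReal * (ENNReal.ofReal (x T ⬝ᵥ J_T *ᵥ x T) +
          ∫⁻ s in Icc t₀ T, ENNReal.ofReal (x s ⬝ᵥ Q s *ᵥ x s + u s ⬝ᵥ R s *ᵥ u s)) := rfl
end
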